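/- Normal operator of the uncoupled photography transform: for f ∈ S(ℝ²ⁿ) (with all integrals absolutely convergent), P̄*P̄ f = K * f where K(x, u) = ∏_{i=1}^n |xᵢ - uᵢ|^{-1}, i.e. P̄*P̄ f(x,u) = ∫_{ℝ²ⁿ} ∏ᵢ |(xᵢ-xᵢ') - (uᵢ-uᵢ')|^{-1} f(x',u') dx' du'. -/

import Mathlib

open MeasureTheory SchwartzMap FourierTransform Real

noncomputable section

abbrev En (n : ℕ) := EuclideanSpace ℝ (Fin n)
abbrev E2n (n : ℕ) := WithLp 2 (En n × En n)

instance (n : ℕ) : MeasureSpace (E2n n) := ⟨(volume : Measure (En n × En n)).map (WithLp.toLp 2)⟩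
instance (n : ℕ) : BorelSpace (E2n n) := inferInstance

/-- The uncoupled photography transform `P̄`, with one parameter `αᵢ` per pair `(xᵢ, uᵢ)`. -/
def photoBar (n : ℕ) (f : E2n n → ℂ) (α : Fin n → ℝ) (xbar : En n) : ℂ :=
  (∏ i, |α i|)⁻¹ •
    ∫ u : En n, f (WithLp.toLp 2 ((WithLp.toLp 2 (fun i => (α i)⁻¹ * xbar i + (1 - (α i)⁻¹) * u i) : En n), u))

/-!
In coordinates, `P̄f(α, αx + (1 - α)u) = ∏ |αᵢ|⁻¹ • ∫ f(x + (1 - α⁻¹)(u' - u), u') du'`.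
For fixed `u'` with `u'ᵢ ≠ uᵢ` (almost every `u'`), the coordinatewise substitution
`x'ᵢ = xᵢ + (1 - αᵢ⁻¹)(u'ᵢ - uᵢ)` is injective on `{α | ∀ i, αᵢ ≠ 0}` with Jacobian
`∏ (u'ᵢ - uᵢ)/αᵢ²`, while the kernel at `(x', u')` equals `∏ |αᵢ|/|u'ᵢ - uᵢ|`: Jacobian times
kernel is exactly the weight `∏ |αᵢ|⁻¹` of `P̄`. Applied to `‖f‖` and Tonelli, this substitution
turns the integrability of `K • f` into the joint integrability needed to swap the `α` and `u'`
integrals; applied to `f` it identifies the swapped integral with `∫ K • f`.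
-/

open Set ContinuousLinearMap

section InvAffine

variable {ι : Type*}

def invAffine (a c α : ι → ℝ) : ι → ℝ := fun i => a i + (1 - (α i)⁻¹) * c i

theorem injOn_invAffine (a : ι → ℝ) {c : ι → ℝ} (hc : ∀ i, c i ≠ 0) :
    InjOn (invAffine a c) {α | ∀ i, α i ≠ 0} := by
  intro α _ β _ h
  funext i
  simpa only [invAffine, add_right_inj, mul_left_inj' (hc i), sub_right_inj, inv_inj]
    using congrFun h i

theorem invAffine_image (a : ι → ℝ) {c : ι → ℝ} (hc : ∀ i, c i ≠ 0) :
    invAffine a c '' {α | ∀ i, α i ≠ 0} = {x | ∀ i, x i ≠ a i + c i} := by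
  ext x
  constructor
  · rintro ⟨α, hα, rfl⟩ i h
    simp only [invAffine] at h
    field_simp [hα i] at h
    exact hc i (by linear_combination -h)
  · intro hx
    have hx' : ∀ i, a i + c i - x i ≠ 0 := fun i => sub_ne_zero.2 (hx i).symm
    refine ⟨fun i => c i / (a i + c i - x i), fun i => div_ne_zero (hc i) (hx' i), ?_⟩
    funext i
    have := hx' i
    have := hc i
    simp only [invAffine, inv_div]
    field_simp
    ring

variable [Fintype ι] {E : Type*} [NormedAddCommGroup E] [NormedSpace ℝ E]

def invAffineDeriv (c α : ι → ℝ) : (ι → ℝ) →L[ℝ] (ι → ℝ) :=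
  pi fun i => (toSpanSingleton ℝ (c i / α i ^ 2)).comp (proj i)

theorem hasFDerivAt_invAffine (a c : ι → ℝ) {α : ι → ℝ} (hα : ∀ i, α i ≠ 0) :
    HasFDerivAt (invAffine a c) (invAffineDeriv c α) α := by
  refine hasFDerivAt_pi.2 fun i => ?_
  have h : HasDerivAt (fun t : ℝ => a i + (1 - t⁻¹) * c i) (c i / α i ^ 2) (α i) := by
    simpa [div_eq_inv_mul] using
      (((hasDerivAt_inv (hα i)).const_sub 1).mul_const (c i)).const_add (a i)
  exact h.hasFDerivAt.comp (g := fun t : ℝ => a i + (1 - t⁻¹) * c i) α (hasFDerivAt_apply i α)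

theorem det_invAffineDeriv (c α : ι → ℝ) :
    (invAffineDeriv c α).det = ∏ i, c i / α i ^ 2 := by
  simp [invAffineDeriv, det_pi]

theorem abs_det_invAffineDeriv_mul (a : ι → ℝ) {c α : ι → ℝ} (hc : ∀ i, c i ≠ 0)
    (hα : ∀ i, α i ≠ 0) :
    |(invAffineDeriv c α).det| * ∏ i, |a i - invAffine a c α i + c i|⁻¹ = (∏ i, |α i|)⁻¹ := by
  rw [det_invAffineDeriv, Finset.abs_prod, ← Finset.prod_mul_distrib, ← Finset.prod_inv_distrib]
  refine Finset.prod_congr rfl fun i _ => ?_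
  have := hα i
  have := hc i
  rw [show a i - invAffine a c α i + c i = c i / α i by simp only [invAffine]; field_simp; ring]
  rw [← abs_inv, ← abs_mul, ← abs_inv]
  congr 1
  field_simp

theorem ae_forall_ne (b : ι → ℝ) : ∀ᵐ x : ι → ℝ, ∀ i, x i ≠ b i :=
  ae_all_iff.2 fun i => by
    simpa only [volume_pi] using Measure.ae_eval_ne (fun _ : ι => (volume : Measure ℝ)) i (b i)

theorem measurableSet_forall_ne_zero : MeasurableSet {α : ι → ℝ | ∀ i, α i ≠ 0} := by
  simp only [ofPred_forall]
  exact .iInter fun i => (measurableSet_singleton 0).compl.preimage (measurable_pi_apply i)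

theorem restrict_forall_ne_zero : volume.restrict {α : ι → ℝ | ∀ i, α i ≠ 0} = volume :=
  Measure.restrict_eq_self_of_ae_mem (ae_forall_ne 0)

theorem restrict_invAffine_image (a : ι → ℝ) {c : ι → ℝ} (hc : ∀ i, c i ≠ 0) :
    volume.restrict (invAffine a c '' {α | ∀ i, α i ≠ 0}) = volume := by
  rw [invAffine_image a hc]
  exact Measure.restrict_eq_self_of_ae_mem (ae_forall_ne (a + c))

theorem lintegral_invAffine (a : ι → ℝ) {c : ι → ℝ} (hc : ∀ i, c i ≠ 0)
    (g : (ι → ℝ) → ENNReal) :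
    ∫⁻ x, ‖∏ i, |a i - x i + c i|⁻¹‖ₑ * g x = ∫⁻ α, ‖(∏ i, |α i|)⁻¹‖ₑ * g (invAffine a c α) := by
  calc ∫⁻ x, ‖∏ i, |a i - x i + c i|⁻¹‖ₑ * g x
      = ∫⁻ x in invAffine a c '' {α | ∀ i, α i ≠ 0}, ‖∏ i, |a i - x i + c i|⁻¹‖ₑ * g x := by
        rw [restrict_invAffine_image a hc]
    _ = ∫⁻ α in {α | ∀ i, α i ≠ 0}, ENNReal.ofReal |(invAffineDeriv c α).det| *
          (‖∏ i, |a i - invAffine a c α i + c i|⁻¹‖ₑ * g (invAffine a c α)) :=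
        lintegral_image_eq_lintegral_abs_det_fderiv_mul volume measurableSet_forall_ne_zero
          (fun α hα => (hasFDerivAt_invAffine a c hα).hasFDerivWithinAt) (injOn_invAffine a hc) _
    _ = ∫⁻ α in {α | ∀ i, α i ≠ 0}, ‖(∏ i, |α i|)⁻¹‖ₑ * g (invAffine a c α) := by
        refine setLIntegral_congr_fun measurableSet_forall_ne_zero fun α hα => ?_
        rw [← mul_assoc, ← Real.enorm_of_nonneg (abs_nonneg _), ← enorm_mul,
          abs_det_invAffineDeriv_mul a hc hα]
    _ = ∫⁻ α, ‖(∏ i, |α i|)⁻¹‖ₑ * g (invAffine a c α) := by rw [restrict_forall_ne_zero]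

theorem integral_invAffine (a : ι → ℝ) {c : ι → ℝ} (hc : ∀ i, c i ≠ 0) (g : (ι → ℝ) → E) :
    ∫ x, (∏ i, |a i - x i + c i|⁻¹) • g x = ∫ α, (∏ i, |α i|)⁻¹ • g (invAffine a c α) := by
  calc ∫ x, (∏ i, |a i - x i + c i|⁻¹) • g x
      = ∫ x in invAffine a c '' {α | ∀ i, α i ≠ 0}, (∏ i, |a i - x i + c i|⁻¹) • g x := by
        rw [restrict_invAffine_image a hc]
    _ = ∫ α in {α | ∀ i, α i ≠ 0}, |(invAffineDeriv c α).det| •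
          ((∏ i, |a i - invAffine a c α i + c i|⁻¹) • g (invAffine a c α)) :=
        integral_image_eq_integral_abs_det_fderiv_smul volume measurableSet_forall_ne_zero
          (fun α hα => (hasFDerivAt_invAffine a c hα).hasFDerivWithinAt) (injOn_invAffine a hc) _
    _ = ∫ α in {α | ∀ i, α i ≠ 0}, (∏ i, |α i|)⁻¹ • g (invAffine a c α) := by
        refine setIntegral_congr_fun measurableSet_forall_ne_zero fun α hα => ?_
        rw [smul_smul, abs_det_invAffineDeriv_mul a hc hα]
    _ = ∫ α, (∏ i, |α i|)⁻¹ • g (invAffine a c α) := by rw [restrict_forall_ne_zero]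

end InvAffine

section Fiberwise

variable {n : ℕ} {E : Type*} [NormedAddCommGroup E] [NormedSpace ℝ E]

def photoKernel (a b : Fin n → ℝ) (p : (Fin n → ℝ) × (Fin n → ℝ)) : ℝ :=
  ∏ i, |(a i - p.1 i) - (b i - p.2 i)|⁻¹

theorem photoKernel_apply (a b x u : Fin n → ℝ) :
    photoKernel a b (x, u) = ∏ i, |a i - x i + (u - b) i|⁻¹ := by
  simp only [photoKernel, Pi.sub_apply, sub_sub_eq_add_sub, add_sub_assoc]

theorem integrable_invAffine_prod (a b : Fin n → ℝ) {g : (Fin n → ℝ) × (Fin n → ℝ) → E}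
    (hg : StronglyMeasurable g) (h : Integrable fun p => photoKernel a b p • g p) :
    Integrable fun p : (Fin n → ℝ) × (Fin n → ℝ) =>
      (∏ i, |p.1 i|)⁻¹ • g (invAffine a (p.2 - b) p.1, p.2) := by
  have hF : StronglyMeasurable fun p : (Fin n → ℝ) × (Fin n → ℝ) =>
      (∏ i, |p.1 i|)⁻¹ • g (invAffine a (p.2 - b) p.1, p.2) :=
    (by fun_prop : Measurable fun p : (Fin n → ℝ) × (Fin n → ℝ) =>
      (∏ i, |p.1 i|)⁻¹).stronglyMeasurable.smul (hg.comp_measurable (by unfold invAffine; fun_prop))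
  refine ⟨hF.aestronglyMeasurable, hasFiniteIntegral_iff_enorm.2 ?_⟩
  calc ∫⁻ p : (Fin n → ℝ) × (Fin n → ℝ), ‖(∏ i, |p.1 i|)⁻¹ • g (invAffine a (p.2 - b) p.1, p.2)‖ₑ
      = ∫⁻ u, ∫⁻ α, ‖(∏ i, |α i|)⁻¹ • g (invAffine a (u - b) α, u)‖ₑ :=
        lintegral_prod_symm _ hF.enorm.aemeasurable
    _ = ∫⁻ u, ∫⁻ x, ‖photoKernel a b (x, u) • g (x, u)‖ₑ := by
        refine lintegral_congr_ae ?_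
        filter_upwards [ae_forall_ne b] with u hu
        simp only [enorm_smul, photoKernel_apply]
        exact (lintegral_invAffine a (c := u - b) (fun i => sub_ne_zero.2 (hu i))
          fun x => ‖g (x, u)‖ₑ).symm
    _ = ∫⁻ p, ‖photoKernel a b p • g p‖ₑ :=
        (lintegral_prod_symm _ h.aestronglyMeasurable.enorm).symm
    _ < ⊤ := h.hasFiniteIntegral

theorem integral_integral_invAffine (a b : Fin n → ℝ) {g : (Fin n → ℝ) × (Fin n → ℝ) → E}
    (hg : StronglyMeasurable g) (h : Integrable fun p => photoKernel a b p • g p) :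
    ∫ α, ∫ u, (∏ i, |α i|)⁻¹ • g (invAffine a (u - b) α, u) = ∫ p, photoKernel a b p • g p := by
  rw [integral_integral_swap (integrable_invAffine_prod a b hg h)]
  refine .trans (integral_congr_ae ?_) (integral_prod_symm _ h).symm
  filter_upwards [ae_forall_ne b] with u hu
  simp only [photoKernel_apply]
  exact (integral_invAffine a (c := u - b) (fun i => sub_ne_zero.2 (hu i)) fun x => g (x, u)).symm

end Fiberwise

def coordEquiv (n : ℕ) : ((Fin n → ℝ) × (Fin n → ℝ)) ≃ᵐ E2n n :=
  ((MeasurableEquiv.toLp 2 (Fin n → ℝ)).prodCongr (MeasurableEquiv.toLp 2 (Fin n → ℝ))).trans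
    (MeasurableEquiv.toLp 2 (En n × En n))

theorem measurePreserving_coordEquiv (n : ℕ) : MeasurePreserving (coordEquiv n) :=
  ((MeasurableEquiv.toLp 2 (En n × En n)).measurable.measurePreserving _).comp
    ((PiLp.volume_preserving_toLp (Fin n)).prod (PiLp.volume_preserving_toLp (Fin n)))

theorem photoBar_apply_eq_integral {n : ℕ} (f : E2n n → ℂ) (a b α : Fin n → ℝ) :
    photoBar n f α (WithLp.toLp 2 fun i => α i * a i + (1 - α i) * b i) =
      ∫ u, (∏ i, |α i|)⁻¹ • f (coordEquiv n (invAffine a (u - b) α, u)) := by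
  rw [photoBar, ← integral_smul,
    ← (EuclideanSpace.volume_preserving_symm_measurableEquiv_toLp (Fin n)).symm.integral_comp']
  congr 1 with u
  -- if some `αᵢ = 0`, both sides vanish because `0⁻¹ = 0`
  rcases eq_or_ne (∏ i, |α i|) 0 with h0 | h0
  · simp only [h0, inv_zero, zero_smul]
  · have hα : ∀ i, α i ≠ 0 := fun i =>
      abs_ne_zero.1 (Finset.prod_ne_zero_iff.1 h0 i (Finset.mem_univ i))
    have hcoord : ∀ i, (α i)⁻¹ * (α i * a i + (1 - α i) * b i) + (1 - (α i)⁻¹) * u i =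
        invAffine a (u - b) α i := fun i => by
      have := hα i
      simp only [invAffine, Pi.sub_apply]
      field_simp
      ring
    simp only [MeasurableEquiv.symm_symm, MeasurableEquiv.toLp_apply, WithLp.ofLp_toLp, hcoord]
    rfl

theorem photoBar_normal_operator_general (n : ℕ) (f : 𝓢(E2n n, ℂ)) (z : E2n n)
    (h2 : Integrable (fun w : E2n n =>
      ((∏ i, |(z.ofLp.1 i - w.ofLp.1 i) - (z.ofLp.2 i - w.ofLp.2 i)|⁻¹ : ℝ)) • f w)) :
    ∫ α : Fin n → ℝ,
        photoBar n (⇑f) α (WithLp.toLp 2 (fun i => α i * z.ofLp.1 i + (1 - α i) * z.ofLp.2 i) : En n) =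
      ∫ w : E2n n, ((∏ i, |(z.ofLp.1 i - w.ofLp.1 i) - (z.ofLp.2 i - w.ofLp.2 i)|⁻¹ : ℝ)) • f w := by
  have he := measurePreserving_coordEquiv n
  have hg : StronglyMeasurable (f ∘ coordEquiv n) :=
    (f.continuous.measurable.comp (coordEquiv n).measurable).stronglyMeasurable
  have hint : Integrable fun p => photoKernel z.ofLp.1.ofLp z.ofLp.2.ofLp p • f (coordEquiv n p) :=
    (he.integrable_comp_emb (coordEquiv n).measurableEmbedding).2 h2
  simp_rw [photoBar_apply_eq_integral]
  exact (integral_integral_invAffine _ _ hg hint).trans <| he.integral_comp' fun w =>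
    ((∏ i, |(z.ofLp.1 i - w.ofLp.1 i) - (z.ofLp.2 i - w.ofLp.2 i)|⁻¹ : ℝ)) • f w

/-- the normal operator of `P̄` is convolution with
`∏ᵢ |xᵢ - uᵢ|⁻¹` (under absolute convergence of all the integrals involved). -/
theorem photoBar_normal_operator (n : ℕ) (f : 𝓢(E2n n, ℂ)) (z : E2n n)
    (h1 : Integrable (fun α : Fin n → ℝ =>
      photoBar n (⇑f) α (WithLp.toLp 2 (fun i => α i * z.ofLp.1 i + (1 - α i) * z.ofLp.2 i) : En n)))
    (h2 : Integrable (fun w : E2n n =>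
      ((∏ i, |(z.ofLp.1 i - w.ofLp.1 i) - (z.ofLp.2 i - w.ofLp.2 i)|⁻¹ : ℝ)) • f w)) :
    ∫ α : Fin n → ℝ,
        photoBar n (⇑f) α (WithLp.toLp 2 (fun i => α i * z.ofLp.1 i + (1 - α i) * z.ofLp.2 i) : En n) =
      ∫ w : E2n n, ((∏ i, |(z.ofLp.1 i - w.ofLp.1 i) - (z.ofLp.2 i - w.ofLp.2 i)|⁻¹ : ℝ)) • f w :=
  photoBar_normal_operator_general n f z h2

end
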